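/- arXiv:cs/0409025 — 4 statements merged into one kernel-verified Lean document; each statement's English description precedes it below -/
import Mathlib

section
/- A system f : S^(m) → P*(S^(n)) is non-anticipatory (in the sense: for all u, all x ∈ f(u) and all d ∈ ℝ, if u ∘ τ^d ∈ S^(m) then x ∘ τ^d ∈ S^(n)) if and only if for every u and every x ∈ f(u), either x is constant, or both x and u are non-constant and min{t | u(t-0) ≠ u(t)} ≤ min{t | x(t-0) ≠ x(t)} (the first input switch precedes or equals the first output switch). -/
open Function Set

abbrev Vec (m : ℕ) := Fin m → Bool

/-- `u : ℝ → α` is a signal: a step function with an unbounded increasing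
sequence of switch points `0 ≤ t 0 < t 1 < ...`, constant on `(-∞, t 0)`
and on each interval `[t k, t (k+1))`. -/
def IsSignal {α : Type*} (u : ℝ → α) : Prop :=
  ∃ t : ℕ → ℝ, 0 ≤ t 0 ∧ StrictMono t ∧ (∀ M : ℝ, ∃ k : ℕ, M < t k) ∧
    (∀ s s' : ℝ, s < t 0 → s' < t 0 → u s = u s') ∧
    (∀ k : ℕ, ∀ s : ℝ, t k ≤ s → s < t (k + 1) → u s = u (t k))

/-- The time translation `τ^d(t) = t - d`. -/
def tau (d : ℝ) : ℝ → ℝ := fun t => t - d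

/-- `u` switches at `t`: the left limit `u(t-0)` differs from `u t`. -/
def SwitchAt {α : Type*} (u : ℝ → α) (t : ℝ) : Prop :=
  ∃ ε > (0 : ℝ), ∀ s : ℝ, t - ε < s → s < t → u s ≠ u t

/-- An asynchronous system: on every signal input, the value is a nonempty
set of signals. -/
def IsSystem {α β : Type*} (f : (ℝ → α) → Set (ℝ → β)) : Prop :=
  ∀ u, IsSignal u → (f u).Nonempty ∧ ∀ x ∈ f u, IsSignal x

/-- Autonomous system: constant as a function of the (signal) input. -/
def Autonomous {α β : Type*} (f : (ℝ → α) → Set (ℝ → β)) : Prop :=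
  ∃ X : Set (ℝ → β), ∀ u, IsSignal u → f u = X

/-- Deterministic system: every value is a singleton. -/
def Deterministic {α β : Type*} (f : (ℝ → α) → Set (ℝ → β)) : Prop :=
  ∀ u, IsSignal u → ∃ x, f u = {x}

/-- Finite system: every value is a finite set. -/
def FiniteSys {α β : Type*} (f : (ℝ → α) → Set (ℝ → β)) : Prop :=
  ∀ u, IsSignal u → (f u).Finite

/-- Non-anticipation, first definition. -/
def NonAnticip1 {α β : Type*} (f : (ℝ → α) → Set (ℝ → β)) : Prop :=
  ∀ u, IsSignal u → ∀ x ∈ f u, ∀ d : ℝ,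
    IsSignal (u ∘ tau d) → IsSignal (x ∘ tau d)

/-- Non-anticipation, second definition. -/
def NonAnticip2 {α β : Type*} (f : (ℝ → α) → Set (ℝ → β)) : Prop :=
  ∀ t₁ : ℝ, ∀ u v, IsSignal u → IsSignal v → (∀ s < t₁, u s = v s) →
    ∀ x ∈ f u, ∃ y ∈ f v, ∀ s < t₁, x s = y s

/-- Time invariance. -/
def TimeInv {α β : Type*} (f : (ℝ → α) → Set (ℝ → β)) : Prop :=
  ∀ u, IsSignal u → ∀ x ∈ f u, ∀ d : ℝ, IsSignal (u ∘ tau d) →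
    IsSignal (x ∘ tau d) ∧ (x ∘ tau d) ∈ f (u ∘ tau d)

/-- Serial connection `f ∘ (f¹,...,fᵖ)`, identifying `S^(m₁)×...×S^(m_p)`
with `S^(m₁+...+m_p)` via the dependent product. -/
def serial {p n : ℕ} {mdim ndim : Fin p → ℕ}
    (f : (ℝ → ∀ i, Vec (ndim i)) → Set (ℝ → Vec n))
    (fi : ∀ i, (ℝ → Vec (mdim i)) → Set (ℝ → Vec (ndim i))) :
    (ℝ → ∀ i, Vec (mdim i)) → Set (ℝ → Vec n) :=
  fun u => {x | ∃ y : ∀ i, ℝ → Vec (ndim i),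
    (∀ i, y i ∈ fi i (fun t => u t i)) ∧ x ∈ f (fun t i => y i t)}

/-- Stability relative to a Boolean function `H`. -/
def StableRel {m q n : ℕ} (H : Vec m → Vec q)
    (f : (ℝ → Vec m) → Set (ℝ → Vec n)) : Prop :=
  ∀ u, IsSignal u → ∀ x ∈ f u,
    (∃ t₁ : ℝ, ∀ t ≥ t₁, H (u t) = H (u t₁)) →
    ∃ t₁ : ℝ, ∀ t ≥ t₁, x t = x t₁

section AuxSig

variable {α : Type*} {u : ℝ → α} {t : ℕ → ℝ}

lemma isSignal_of_const {c : α} (h : ∀ s, u s = c) : IsSignal u := by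
  refine ⟨fun k => (k : ℝ), by norm_num, Nat.strictMono_cast, fun M => exists_nat_gt M, ?_, ?_⟩
  · intro s s' _ _; rw [h, h]
  · intro k s _ _; rw [h, h]

lemma locate_grid (hmono : StrictMono t) (hunb : ∀ M : ℝ, ∃ k : ℕ, M < t k)
    {p : ℝ} (hp : t 0 ≤ p) : ∃ j : ℕ, t j ≤ p ∧ p < t (j + 1) := by
  classical
  have hex : ∃ k, p < t k := hunb p
  have hk := Nat.find_spec hex
  rcases hn : Nat.find hex with _ | j
  · rw [hn] at hk; exact absurd hp (not_le.mpr hk)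
  · rw [hn] at hk
    refine ⟨j, ?_, hk⟩
    have := Nat.find_min hex (m := j) (by omega)
    exact not_lt.mp this

lemma switch_eq_grid (hmono : StrictMono t) (hunb : ∀ M : ℝ, ∃ k : ℕ, M < t k)
    (hconst : ∀ s s' : ℝ, s < t 0 → s' < t 0 → u s = u s')
    (hstep : ∀ k : ℕ, ∀ s : ℝ, t k ≤ s → s < t (k + 1) → u s = u (t k))
    {p : ℝ} (hp : SwitchAt u p) : ∃ k, p = t k := by
  obtain ⟨ε, hε, hne⟩ := hp
  by_cases h0 : p < t 0
  · exfalso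
    set s := p - min ε (t 0 - p) / 2 with hs
    have hmin : 0 < min ε (t 0 - p) := lt_min hε (by linarith)
    have h1 : p - ε < s := by
      have : min ε (t 0 - p) ≤ ε := min_le_left _ _
      simp only [hs]; linarith
    have h2 : s < p := by simp only [hs]; linarith
    exact hne s h1 h2 (hconst s p (by linarith) h0)
  · push_neg at h0
    obtain ⟨j, hj1, hj2⟩ := locate_grid hmono hunb h0
    by_contra hng
    push_neg at hng
    have hj1' : t j < p := lt_of_le_of_ne hj1 (fun h => hng j h.symm)
    set s := (max (p - ε) (t j) + p) / 2 with hs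
    have hmax : max (p - ε) (t j) < p := max_lt (by linarith) hj1'
    have h2 : s < p := by simp only [hs]; linarith
    have h1 : p - ε < s := by
      have : p - ε ≤ max (p - ε) (t j) := le_max_left _ _
      simp only [hs]; linarith
    have h3 : t j ≤ s := by
      have : t j ≤ max (p - ε) (t j) := le_max_right _ _
      simp only [hs]; linarith
    have hv : u s = u (t j) := hstep j s h3 (by linarith)
    have hv' : u p = u (t j) := hstep j p hj1 hj2
    exact hne s h1 h2 (hv.trans hv'.symm)

lemma switch_nonneg (hu : IsSignal u) {p : ℝ} (hp : SwitchAt u p) : 0 ≤ p := by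
  obtain ⟨t, ht0, hmono, hunb, hconst, hstep⟩ := hu
  obtain ⟨k, hk⟩ := switch_eq_grid hmono hunb hconst hstep hp
  have : t 0 ≤ t k := hmono.monotone (Nat.zero_le k)
  linarith

lemma val_of_not_switch0
    (hconst : ∀ s s' : ℝ, s < t 0 → s' < t 0 → u s = u s')
    (h : ¬ SwitchAt u (t 0)) : u (t 0) = u (t 0 - 1) := by
  unfold SwitchAt at h
  push_neg at h
  obtain ⟨s, h1, h2, h3⟩ := h 1 one_pos
  rw [← h3]
  exact hconst s (t 0 - 1) h2 (by linarith)

lemma val_of_not_switch_succ (hmono : StrictMono t)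
    (hstep : ∀ k : ℕ, ∀ s : ℝ, t k ≤ s → s < t (k + 1) → u s = u (t k))
    (k : ℕ) (h : ¬ SwitchAt u (t (k + 1))) : u (t (k + 1)) = u (t k) := by
  unfold SwitchAt at h
  push_neg at h
  have hlt : t k < t (k + 1) := hmono (Nat.lt_succ_self k)
  obtain ⟨s, h1, h2, h3⟩ := h (t (k + 1) - t k) (by linarith)
  rw [← h3]
  exact hstep k s (by linarith) h2

lemma const_before (hmono : StrictMono t)
    (hconst : ∀ s s' : ℝ, s < t 0 → s' < t 0 → u s = u s')
    (hstep : ∀ k : ℕ, ∀ s : ℝ, t k ≤ s → s < t (k + 1) → u s = u (t k))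
    (K : ℕ) (hK : ∀ j < K, ¬ SwitchAt u (t j)) :
    ∀ s, s < t K → u s = u (t 0 - 1) := by
  induction K with
  | zero => intro s hs; exact hconst s (t 0 - 1) hs (by linarith)
  | succ k ih =>
    intro s hs
    by_cases h' : s < t k
    · exact ih (fun j hj => hK j (Nat.lt_succ_of_lt hj)) s h'
    · push_neg at h'
      rw [hstep k s h' hs]
      cases k with
      | zero => exact val_of_not_switch0 hconst (hK 0 (Nat.zero_lt_succ 0))
      | succ j =>
        rw [val_of_not_switch_succ hmono hstep j (hK (j + 1) (by omega))]
        exact ih (fun i hi => hK i (by omega)) (t j) (hmono (by omega))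

lemma isLeast_switch (hu : IsSignal u) (hnc : ¬ ∃ c, ∀ s, u s = c) :
    ∃ t₁, IsLeast {p | SwitchAt u p} t₁ := by
  classical
  obtain ⟨t, ht0, hmono, hunb, hconst, hstep⟩ := hu
  have hex : ∃ k, SwitchAt u (t k) := by
    by_contra h
    push_neg at h
    refine hnc ⟨u (t 0 - 1), fun s => ?_⟩
    obtain ⟨K, hK⟩ := hunb s
    exact const_before hmono hconst hstep K (fun j _ => h j) s hK
  refine ⟨t (Nat.find hex), Nat.find_spec hex, fun p hp => ?_⟩
  obtain ⟨j, hj⟩ := switch_eq_grid hmono hunb hconst hstep hp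
  have hsj : SwitchAt u (t j) := hj ▸ hp
  have : Nat.find hex ≤ j := Nat.find_le hsj
  rw [hj]
  exact hmono.monotone this

lemma isSignal_shift (hu : IsSignal u) {t₁ : ℝ}
    (hl : IsLeast {p | SwitchAt u p} t₁) (d : ℝ) (hd : 0 ≤ t₁ + d) :
    IsSignal (u ∘ tau d) := by
  obtain ⟨t, ht0, hmono, hunb, hconst, hstep⟩ := hu
  obtain ⟨K, hKeq⟩ := switch_eq_grid hmono hunb hconst hstep hl.1
  have hnos : ∀ j < K, ¬ SwitchAt u (t j) := by
    intro j hj hsw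
    have h1 : t₁ ≤ t j := hl.2 hsw
    have h2 : t j < t K := hmono hj
    rw [hKeq] at h1; linarith
  have hcb := const_before hmono hconst hstep K hnos
  refine ⟨fun j => t (K + j) + d, ?_, ?_, ?_, ?_, ?_⟩
  · show 0 ≤ t (K + 0) + d
    have : t (K + 0) = t K := by norm_num
    rw [this, ← hKeq]; exact hd
  · intro a b hab
    show t (K + a) + d < t (K + b) + d
    have : t (K + a) < t (K + b) := hmono (by omega)
    linarith
  · intro M
    obtain ⟨k, hk⟩ := hunb (M - d)
    have : t k ≤ t (K + k) := hmono.monotone (by omega)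
    exact ⟨k, show M < t (K + k) + d by linarith⟩
  · intro s s' hs hs'
    have hs2 : s < t (K + 0) + d := hs
    have hs2' : s' < t (K + 0) + d := hs'
    have h0 : t (K + 0) = t K := by norm_num
    rw [h0] at hs2 hs2'
    have e1 : u (tau d s) = u (t 0 - 1) := hcb (s - d) (by linarith)
    have e2 : u (tau d s') = u (t 0 - 1) := hcb (s' - d) (by linarith)
    exact e1.trans e2.symm
  · intro k s h1 h2
    have h1' : t (K + k) + d ≤ s := h1
    have h2' : s < t (K + (k + 1)) + d := h2
    have hk1 : K + (k + 1) = K + k + 1 := by omega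
    rw [hk1] at h2'
    show u (tau d s) = u (tau d (t (K + k) + d))
    have e : tau d (t (K + k) + d) = t (K + k) := by
      show t (K + k) + d - d = t (K + k); ring
    rw [e]
    show u (s - d) = u (t (K + k))
    exact hstep (K + k) (s - d) (by linarith) (by linarith)

lemma switchAt_comp_tau (u : ℝ → α) (d p : ℝ) :
    SwitchAt (u ∘ tau d) p ↔ SwitchAt u (p - d) := by
  constructor
  · rintro ⟨ε, hε, h⟩
    refine ⟨ε, hε, fun s h1 h2 hne => ?_⟩
    have := h (s + d) (by linarith) (by linarith)
    apply this
    simpa [tau, add_sub_cancel_right] using hne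
  · rintro ⟨ε, hε, h⟩
    refine ⟨ε, hε, fun s h1 h2 hne => ?_⟩
    have := h (s - d) (by linarith) (by linarith)
    apply this
    simpa [tau] using hne

end AuxSig
theorem stmt7 {m n : ℕ} (f : (ℝ → Vec m) → Set (ℝ → Vec n))
    (hf : ∀ u, IsSignal u → ∀ x ∈ f u, IsSignal x) :
    NonAnticip1 f ↔
      ∀ u, IsSignal u → ∀ x ∈ f u,
        (∃ c, ∀ t, x t = c) ∨
        ((¬ ∃ c, ∀ t, u t = c) ∧ (¬ ∃ c, ∀ t, x t = c) ∧
          ∃ t₀ t₁ : ℝ, IsLeast {t | SwitchAt u t} t₀ ∧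
            IsLeast {t | SwitchAt x t} t₁ ∧ t₀ ≤ t₁) := by
  constructor
  · intro hna u hu x hx
    have hxsig := hf u hu x hx
    by_cases hxc : ∃ c, ∀ s, x s = c
    · exact Or.inl hxc
    right
    obtain ⟨t₁, ht₁⟩ := isLeast_switch hxsig hxc
    have huc : ¬ ∃ c, ∀ s, u s = c := by
      rintro ⟨c, hc⟩
      set d := -(t₁ + 1) with hdd
      have hud : IsSignal (u ∘ tau d) := isSignal_of_const (fun s => hc (tau d s))
      have hxd : IsSignal (x ∘ tau d) := hna u hu x hx d hud
      have hsw : SwitchAt (x ∘ tau d) (t₁ + d) := by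
        rw [switchAt_comp_tau]
        simpa using ht₁.1
      have := switch_nonneg hxd hsw
      simp only [hdd] at this; linarith
    obtain ⟨t₀, ht₀⟩ := isLeast_switch hu huc
    refine ⟨huc, hxc, t₀, t₁, ht₀, ht₁, ?_⟩
    have hud : IsSignal (u ∘ tau (-t₀)) :=
      isSignal_shift hu ht₀ (-t₀) (by linarith)
    have hxd : IsSignal (x ∘ tau (-t₀)) := hna u hu x hx (-t₀) hud
    have hsw : SwitchAt (x ∘ tau (-t₀)) (t₁ + -t₀) := by
      rw [switchAt_comp_tau]
      simpa using ht₁.1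
    have := switch_nonneg hxd hsw
    linarith
  · intro h u hu x hx d hud
    rcases h u hu x hx with ⟨c, hc⟩ | ⟨huc, hxc, t₀, t₁, ht₀, ht₁, hle⟩
    · exact isSignal_of_const (fun s => hc (tau d s))
    · have hxsig := hf u hu x hx
      have hsw : SwitchAt (u ∘ tau d) (t₀ + d) := by
        rw [switchAt_comp_tau]
        simpa using ht₀.1
      have h0 : 0 ≤ t₀ + d := switch_nonneg hud hsw
      exact isSignal_shift hxsig ht₁ d (by linarith)
end

section
/- A system f : S^(m) → P*(S^(n)) is both autonomous and non-anticipatory (first definition) if and only if there exists a set X ⊆ S^(n) with f(u) = X for all u, and every x ∈ X is a constant function. -/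
open Function Set

lemma sigConst {α : Type*} (c : α) : IsSignal (fun _ => c) :=
  ⟨fun k => (k : ℝ), by norm_num,
    fun a b h => by simpa using (Nat.cast_lt (α := ℝ)).2 h,
    fun M => by obtain ⟨k, hk⟩ := exists_nat_gt M; exact ⟨k, hk⟩,
    fun _ _ _ _ => rfl, fun _ _ _ _ => rfl⟩

theorem stmt9 {m n : ℕ} (f : (ℝ → Vec m) → Set (ℝ → Vec n)) :
    (Autonomous f ∧ NonAnticip1 f) ↔
      ∃ X : Set (ℝ → Vec n), (∀ u, IsSignal u → f u = X) ∧
        ∀ x ∈ X, ∃ c, ∀ t, x t = c := by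
  constructor
  · rintro ⟨⟨X, hX⟩, hNA⟩
    set u0 : ℝ → Vec m := fun _ => (fun _ => false) with hu0def
    have hu0 : IsSignal u0 := sigConst _
    refine ⟨X, hX, ?_⟩
    intro x hx
    have hxmem : x ∈ f u0 := by rw [hX u0 hu0]; exact hx
    have key : ∀ d : ℝ, IsSignal (x ∘ tau d) := by
      intro d
      exact hNA u0 hu0 x hxmem d (by exact hu0)
    have hconst : ∀ M : ℝ, ∀ a b : ℝ, a < M → b < M → x a = x b := by
      intro M a b ha hb
      obtain ⟨t, ht0, _, _, hlt, _⟩ := key (-M)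
      have h := hlt (a - M) (b - M) (by linarith) (by linarith)
      simpa [tau, Function.comp, sub_neg_eq_add, sub_add_cancel] using h
    refine ⟨x 0, fun t => ?_⟩
    have h1 : t ≤ max t 0 := le_max_left _ _
    have h2 : (0 : ℝ) ≤ max t 0 := le_max_right _ _
    exact hconst (max t 0 + 1) t 0 (by linarith) (by linarith)
  · rintro ⟨X, hX, hc⟩
    refine ⟨⟨X, hX⟩, ?_⟩
    intro u hu x hx d _
    rw [hX u hu] at hx
    obtain ⟨c, hcx⟩ := hc x hx
    have : x ∘ tau d = fun _ => c := funext fun t => hcx _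
    rw [this]
    exact sigConst c
end

section
/- If the systems f : S^(m) → P*(S^(n)) and f^1,...,f^p (f^i : S^(m_i) → P*(S^(n_i)), n₁+...+n_p = m) are all non-anticipatory in the first sense, then the serial connection f ∘ (f^1,...,f^p) is non-anticipatory in the first sense. -/
open Function Set

lemma isSignal_const {β : Type*} (b : β) : IsSignal (fun _ : ℝ => b) := by
  refine ⟨fun k => (k : ℝ), by norm_num, ?_, fun M => ?_, fun _ _ _ _ => rfl,
    fun _ _ _ _ => rfl⟩
  · exact strictMono_nat_of_lt_succ fun n => by exact_mod_cast Nat.lt_succ_self n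
  · obtain ⟨k, hk⟩ := exists_nat_gt M
    exact ⟨k, hk⟩

lemma isSignal_proj {p : ℕ} {α : Fin p → Type*} {u : ℝ → ∀ i, α i}
    (h : IsSignal u) (i : Fin p) : IsSignal (fun t => u t i) := by
  obtain ⟨t, h0, hm, hub, hpre, hstep⟩ := h
  exact ⟨t, h0, hm, hub, fun s s' hs hs' => congrFun (hpre s s' hs hs') i,
    fun k s h1 h2 => congrFun (hstep k s h1 h2) i⟩

lemma isSignal_pi {p : ℕ} {α : Fin p → Type*} (y : ∀ i, ℝ → α i)
    (hy : ∀ i, IsSignal (y i)) : IsSignal (fun t i => y i t) := by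
  classical
  rcases Nat.eq_zero_or_pos p with hp | hp
  · subst hp
    have : (fun (t : ℝ) (i : Fin 0) => y i t) = fun _ => (fun i : Fin 0 => i.elim0) := by
      funext t i; exact i.elim0
    rw [this]
    exact isSignal_const _
  haveI : Nonempty (Fin p) := ⟨⟨0, hp⟩⟩
  choose τ h0 hm hub hpre hstep using hy
  set S : Set ℝ := ⋃ i, Set.range (τ i) with hS
  have hmemS : ∀ i j, τ i j ∈ S := fun i j => Set.mem_iUnion.2 ⟨i, Set.mem_range_self j⟩
  -- next element of S above a
  set nxt : ℝ → Fin p → ℝ := fun a i => τ i (Nat.find (hub i a)) with hnxt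
  have hnxt_gt : ∀ a i, a < nxt a i := fun a i => Nat.find_spec (hub i a)
  have hnxt_min : ∀ a i j, a < τ i j → nxt a i ≤ τ i j := fun a i j hj =>
    (hm i).monotone (Nat.find_min' (hub i a) hj)
  set next : ℝ → ℝ := fun a => Finset.univ.inf' Finset.univ_nonempty (nxt a) with hnextdef
  have hnext_gt : ∀ a, a < next a := fun a =>
    (Finset.lt_inf'_iff _).2 fun i _ => hnxt_gt a i
  have hnext_mem : ∀ a, next a ∈ S := by
    intro a
    obtain ⟨i, _, hi⟩ := Finset.exists_mem_eq_inf' (Finset.univ_nonempty) (nxt a)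
    rw [hnextdef]
    simp only []
    rw [hi]
    exact hmemS i _
  have hnext_min : ∀ a s, s ∈ S → a < s → next a ≤ s := by
    intro a s hs has
    obtain ⟨i, j, rfl⟩ : ∃ i j, τ i j = s := by
      obtain ⟨i, hi⟩ := Set.mem_iUnion.1 hs
      obtain ⟨j, hj⟩ := hi
      exact ⟨i, j, hj⟩
    exact le_trans (Finset.inf'_le _ (Finset.mem_univ i)) (hnxt_min a i j has)
  -- the merged sequence
  set t' : ℕ → ℝ := fun k =>
    Nat.rec (Finset.univ.inf' Finset.univ_nonempty (fun i => τ i 0))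
      (fun _ a => next a) k with ht'
  have ht'succ : ∀ k, t' (k + 1) = next (t' k) := fun k => rfl
  have ht'0 : (0 : ℝ) ≤ t' 0 := Finset.le_inf' _ _ fun i _ => h0 i
  have ht'mono : StrictMono t' := strictMono_nat_of_lt_succ fun n => hnext_gt (t' n)
  have ht'mem : ∀ k, t' k ∈ S := by
    intro k
    cases k with
    | zero =>
      obtain ⟨i, _, hi⟩ := Finset.exists_mem_eq_inf' (Finset.univ_nonempty)
        (fun i => τ i 0)
      have : t' 0 = τ i 0 := hi
      rw [this]; exact hmemS i 0
    | succ m => rw [ht'succ]; exact hnext_mem _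
  have ht'ub : ∀ M : ℝ, ∃ k, M < t' k := by
    intro M
    by_contra hcon
    push_neg at hcon
    have hfin : (S ∩ Set.Iic M).Finite := by
      have hsub : S ∩ Set.Iic M ⊆ ⋃ i, τ i '' Set.Iio (Nat.find (hub i M)) := by
        rintro s ⟨hsS, hsM⟩
        obtain ⟨i, hi⟩ := Set.mem_iUnion.1 hsS
        obtain ⟨j, rfl⟩ := hi
        refine Set.mem_iUnion.2 ⟨i, ⟨j, ?_, rfl⟩⟩
        by_contra hj
        simp only [Set.mem_Iio, not_lt] at hj
        exact absurd (le_trans ((hm i).monotone hj) hsM)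
          (not_le.2 (Nat.find_spec (hub i M)))
      exact Set.Finite.subset
        (Set.finite_iUnion fun i => (Set.finite_Iio _).image _) hsub
    exact (Set.infinite_of_injective_forall_mem (f := t') (s := S ∩ Set.Iic M)
      ht'mono.injective (fun k => ⟨ht'mem k, hcon k⟩)) hfin
  refine ⟨t', ht'0, ht'mono, ht'ub, ?_, ?_⟩
  · intro s s' hs hs'
    funext i
    have hi0 : t' 0 ≤ τ i 0 := Finset.inf'_le _ (Finset.mem_univ i)
    exact hpre i s s' (lt_of_lt_of_le hs hi0) (lt_of_lt_of_le hs' hi0)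
  · intro k s hks hsk
    funext i
    rcases lt_or_ge (t' k) (τ i 0) with hcase | hcase
    · have h1 : t' (k + 1) ≤ τ i 0 := by
        rw [ht'succ]; exact hnext_min _ _ (hmemS i 0) hcase
      exact hpre i s (t' k) (lt_of_lt_of_le hsk h1) hcase
    · have hexJ : ∃ J, t' k < τ i J := hub i (t' k)
      obtain ⟨j, hJ⟩ : ∃ j, Nat.find hexJ = j + 1 := by
        refine Nat.exists_eq_succ_of_ne_zero ?_
        intro h0'
        have := Nat.find_spec hexJ
        rw [h0'] at this
        exact absurd hcase (not_le.2 this)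
      have hj1 : τ i j ≤ t' k := by
        have := Nat.find_min hexJ (show j < Nat.find hexJ by omega)
        exact not_lt.1 this
      have hj2 : t' k < τ i (j + 1) := by
        have := Nat.find_spec hexJ
        rwa [hJ] at this
      have hj3 : t' (k + 1) ≤ τ i (j + 1) := by
        rw [ht'succ]; exact hnext_min _ _ (hmemS i (j + 1)) hj2
      calc y i s = y i (τ i j) :=
            hstep i j s (le_trans hj1 hks) (lt_of_lt_of_le hsk hj3)
        _ = y i (t' k) := (hstep i j (t' k) hj1 hj2).symm

theorem stmt11 {p n : ℕ} {mdim ndim : Fin p → ℕ}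
    (f : (ℝ → ∀ i, Vec (ndim i)) → Set (ℝ → Vec n))
    (fi : ∀ i, (ℝ → Vec (mdim i)) → Set (ℝ → Vec (ndim i)))
    (hf : IsSystem f) (hfi : ∀ i, IsSystem (fi i))
    (h : NonAnticip1 f) (hi : ∀ i, NonAnticip1 (fi i)) :
    NonAnticip1 (serial f fi) := by
  intro u hu x hx d hud
  obtain ⟨y, hy, hxf⟩ := hx
  have hui : ∀ i, IsSignal (fun t => u t i) := fun i => isSignal_proj hu i
  have hyi : ∀ i, IsSignal (y i) := fun i =>
    ((hfi i _ (hui i)).2 _ (hy i))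
  have hudi : ∀ i, IsSignal ((fun t => u t i) ∘ tau d) := fun i =>
    isSignal_proj (α := fun i => Vec (mdim i)) (u := u ∘ tau d) hud i
  have hyid : ∀ i, IsSignal (y i ∘ tau d) := fun i =>
    hi i _ (hui i) _ (hy i) d (hudi i)
  have hY : IsSignal (fun t i => y i t) := isSignal_pi y hyi
  have hYd : IsSignal ((fun t i => y i t) ∘ tau d) :=
    isSignal_pi (fun i => y i ∘ tau d) hyid
  exact h _ hY x hxf d hYd
end

section
/- If f, f^1, ..., f^p are non-anticipatory in the second sense, then the serial connection f ∘ (f^1,...,f^p) is non-anticipatory in the second sense. -/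
open Function Set

lemma signal_proj {α : Type*} {β : α → Type*} (u : ℝ → ∀ i, β i) (i : α)
    (hu : IsSignal u) : IsSignal (fun s => u s i) := by
  obtain ⟨t, h0, hm, hub, hpre, hint⟩ := hu
  exact ⟨t, h0, hm, hub, fun s s' hs hs' => congrFun (hpre s s' hs hs') i,
    fun k s h1 h2 => congrFun (hint k s h1 h2) i⟩

lemma signal_const_between {α : Type*} {u : ℝ → α} {t : ℕ → ℝ}
    (hm : StrictMono t) (hub : ∀ M : ℝ, ∃ k, M < t k)
    (hpre : ∀ s s' : ℝ, s < t 0 → s' < t 0 → u s = u s')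
    (hint : ∀ k : ℕ, ∀ s : ℝ, t k ≤ s → s < t (k+1) → u s = u (t k))
    {a s : ℝ} (has : a ≤ s) (hno : ∀ j, ¬ (a < t j ∧ t j ≤ s)) :
    u s = u a := by
  by_cases hs : s < t 0
  · exact hpre s a hs (lt_of_le_of_lt has hs)
  push_neg at hs
  have ha0 : t 0 ≤ a := by
    by_contra hc; push_neg at hc; exact hno 0 ⟨hc, hs⟩
  obtain ⟨K, hK⟩ := hub s
  have hfin : ∀ k, t k ≤ s → k < K := fun k hk =>
    lt_of_not_ge fun hle => absurd (le_trans (hm.monotone hle) hk) (not_le.2 hK)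
  classical
  set k := Nat.findGreatest (fun k => t k ≤ s) K with hkdef
  have hks : t k ≤ s :=
    Nat.findGreatest_spec (P := fun k => t k ≤ s) (Nat.zero_le K) hs
  have hks' : s < t (k+1) := by
    by_contra hc
    push_neg at hc
    exact Nat.findGreatest_is_greatest (Nat.lt_succ_self k)
      (hfin (k+1) hc).le hc
  have hka : t k ≤ a := by
    by_contra hc; push_neg at hc; exact hno k ⟨hc, hks⟩
  rw [hint k s hks hks', hint k a hka (lt_of_le_of_lt has hks')]

lemma range_inter_Iic_finite {g : ℕ → ℝ} (hm : StrictMono g)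
    (hub : ∀ M : ℝ, ∃ k, M < g k) (M : ℝ) :
    (Set.range g ∩ Set.Iic M).Finite := by
  obtain ⟨K, hK⟩ := hub M
  apply Set.Finite.subset ((Set.finite_Iio K).image g)
  rintro x ⟨⟨k, rfl⟩, hx⟩
  exact ⟨k, lt_of_not_ge fun hle =>
    absurd (le_trans (hm.monotone hle) hx) (not_le.2 hK), rfl⟩

lemma signal_pi {p : ℕ} {β : Fin p → Type*} (y : ∀ i, ℝ → β i)
    (hy : ∀ i, IsSignal (y i)) : IsSignal (fun t i => y i t) := by
  choose t h0 hm hub hpre hint using hy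
  set S : Set ℝ := (Set.range ((↑) : ℕ → ℝ)) ∪ ⋃ i, Set.range (t i) with hS
  have hS0 : (0:ℝ) ∈ S := Or.inl ⟨0, by norm_num⟩
  have hfin : ∀ M : ℝ, (S ∩ Set.Iic M).Finite := by
    intro M
    have : S ∩ Set.Iic M =
        (Set.range ((↑) : ℕ → ℝ) ∩ Set.Iic M) ∪
        ⋃ i, (Set.range (t i) ∩ Set.Iic M) := by
      rw [hS, Set.union_inter_distrib_right, Set.iUnion_inter]
    rw [this]
    refine Set.Finite.union ?_ (Set.finite_iUnion fun i =>
      range_inter_Iic_finite (hm i) (hub i) M)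
    exact range_inter_Iic_finite (fun a b hab => by exact_mod_cast hab)
      (fun M => by obtain ⟨k, hk⟩ := exists_nat_gt M; exact ⟨k, hk⟩) M
  have hunb : ∀ M : ℝ, ∃ s ∈ S, M < s := by
    intro M
    obtain ⟨k, hk⟩ := exists_nat_gt M
    exact ⟨(k : ℝ), Or.inl ⟨k, rfl⟩, hk⟩
  have hnext : ∀ a : ℝ, ∃ m, m ∈ S ∧ a < m ∧ ∀ s ∈ S, a < s → m ≤ s := by
    intro a
    obtain ⟨s, hsS, has⟩ := hunb a
    have hFfin : (S ∩ Set.Ioc a s).Finite :=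
      (hfin s).subset (fun x ⟨hx1, hx2⟩ => ⟨hx1, hx2.2⟩)
    have hFne : (S ∩ Set.Ioc a s).Nonempty := ⟨s, hsS, has, le_refl s⟩
    obtain ⟨m, ⟨hmS, hma, hms⟩, hmin⟩ :=
      Set.exists_min_image (S ∩ Set.Ioc a s) id hFfin hFne
    refine ⟨m, hmS, hma, fun s' hs'S has' => ?_⟩
    by_cases hss : s' ≤ s
    · exact hmin s' ⟨hs'S, has', hss⟩
    · exact le_trans hms (le_of_not_ge hss)
  choose next hnS hnlt hnmin using hnext
  set T : ℕ → ℝ := fun k => next^[k] 0 with hT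
  have hTsucc : ∀ k, T (k+1) = next (T k) := fun k =>
    Function.iterate_succ_apply' next k 0
  have hTS : ∀ k, T k ∈ S := by
    intro k
    induction k with
    | zero => exact hS0
    | succ k _ => rw [hTsucc]; exact hnS (T k)
  have hTmono : StrictMono T := strictMono_nat_of_lt_succ fun k => by
    rw [hTsucc]; exact hnlt (T k)
  have hTunb : ∀ M : ℝ, ∃ k, M < T k := by
    intro M
    by_contra hc
    push_neg at hc
    exact (hfin M).not_infinite
      (Set.infinite_of_injective_forall_mem (s := S ∩ Set.Iic M) (f := T)
        hTmono.injective fun k => ⟨hTS k, hc k⟩)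
  have hT0 : T 0 = 0 := rfl
  have hnogap : ∀ k j (i : Fin p), T k < t i j → t i j ≤ T (k+1) → t i j = T (k+1) := by
    intro k j i h1 h2
    have := hnmin (T k) (t i j) (Or.inr (Set.mem_iUnion.2 ⟨i, j, rfl⟩)) h1
    rw [hTsucc] at h2 ⊢
    exact le_antisymm h2 this
  refine ⟨T, le_of_eq hT0.symm, hTmono, hTunb, ?_, ?_⟩
  · intro s s' hs hs'
    funext i
    exact hpre i s s' (lt_of_lt_of_le (hT0 ▸ hs) (h0 i))
      (lt_of_lt_of_le (hT0 ▸ hs') (h0 i))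
  · intro k s h1 h2
    funext i
    refine signal_const_between (hm i) (hub i) (hpre i) (hint i) h1 ?_
    rintro j ⟨hj1, hj2⟩
    have hjS : t i j ∈ S := Or.inr (Set.mem_iUnion.2 ⟨i, j, rfl⟩)
    have : T (k+1) ≤ t i j := by rw [hTsucc]; exact hnmin (T k) _ hjS hj1
    exact absurd (lt_of_le_of_lt hj2 h2) (not_lt.2 this)

theorem stmt13 {p n : ℕ} {mdim ndim : Fin p → ℕ}
    (f : (ℝ → ∀ i, Vec (ndim i)) → Set (ℝ → Vec n))
    (fi : ∀ i, (ℝ → Vec (mdim i)) → Set (ℝ → Vec (ndim i)))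
    (hf : IsSystem f) (hfi : ∀ i, IsSystem (fi i))
    (h : NonAnticip2 f) (hi : ∀ i, NonAnticip2 (fi i)) :
    NonAnticip2 (serial f fi) := by
  intro t₁ u v hu hv huv x hx
  obtain ⟨y, hy, hxy⟩ := hx
  have hui : ∀ i, IsSignal (fun s => u s i) := fun i => signal_proj u i hu
  have hvi : ∀ i, IsSignal (fun s => v s i) := fun i => signal_proj v i hv
  have hzex : ∀ i, ∃ z ∈ fi i (fun s => v s i), ∀ s < t₁, y i s = z s :=
    fun i => hi i t₁ _ _ (hui i) (hvi i)
      (fun s hs => congrFun (huv s hs) i) (y i) (hy i)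
  choose z hz hyz using hzex
  have hysig : ∀ i, IsSignal (y i) := fun i => (hfi i _ (hui i)).2 _ (hy i)
  have hzsig : ∀ i, IsSignal (z i) := fun i => (hfi i _ (hvi i)).2 _ (hz i)
  obtain ⟨x', hx', hxx'⟩ := h t₁ (fun s i => y i s) (fun s i => z i s)
    (signal_pi y hysig) (signal_pi z hzsig)
    (fun s hs => funext fun i => hyz i s hs) x hxy
  exact ⟨x', ⟨z, hz, hx'⟩, hxx'⟩
end
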